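/- If for some λ > 0 the system (S_λ) admits a lower solution, then (S_λ) admits a maximal solution (u_λ, v_λ); moreover this maximal solution satisfies u₀(x) + u_λ(x) < 0 and v₀(x) + v_λ(x) < 0 for all x ∈ V. -/

import Mathlib

open Real Finset

/-- The μ-Laplacian on a finite weighted graph. -/
noncomputable def graphLap {V : Type*} [Fintype V] (ω : V → V → ℝ) (μ : V → ℝ)
    (f : V → ℝ) (x : V) : ℝ :=
  (1 / μ x) * ∑ y, ω x y * (f y - f x)

/-- The integral of `f` over `V` with respect to the measure `μ`. -/
noncomputable def graphInt {V : Type*} [Fintype V] (μ : V → ℝ) (f : V → ℝ) : ℝ :=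
  ∑ x, μ x * f x

/-- The total volume `|V|` of the graph. -/
noncomputable def graphVol {V : Type*} [Fintype V] (μ : V → ℝ) : ℝ :=
  ∑ x, μ x

/-- The Dirac delta mass at vertex `p`. -/
noncomputable def diracDelta {V : Type*} [DecidableEq V] (μ : V → ℝ) (p x : V) : ℝ :=
  if x = p then 1 / μ p else 0

/-- `primFun F t = ∫_{√t}^{1} 2 s F(s²) ds`; this gives `g` from `G` and `h` from `H`. -/
noncomputable def primFun (F : ℝ → ℝ) (t : ℝ) : ℝ :=
  ∫ s in Real.sqrt t..(1 : ℝ), 2 * s * F (s ^ 2)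

/-- The pointwise squared gradient `|∇ f|²(x)`. -/
noncomputable def gradSq {V : Type*} [Fintype V] (ω : V → V → ℝ) (μ : V → ℝ)
    (f : V → ℝ) (x : V) : ℝ :=
  (1 / (2 * μ x)) * ∑ y, ω x y * (f y - f x) ^ 2

/-- The gradient norm `‖∇ f‖₂ = (∫_V |∇ f|² dμ)^{1/2}`. -/
noncomputable def gradNorm {V : Type*} [Fintype V] (ω : V → V → ℝ) (μ : V → ℝ)
    (f : V → ℝ) : ℝ :=
  Real.sqrt (graphInt μ (gradSq ω μ f))

/-- The mean value `f̄ = (1/|V|) ∫_V f dμ`. -/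
noncomputable def graphAvg {V : Type*} [Fintype V] (μ : V → ℝ) (f : V → ℝ) : ℝ :=
  (1 / graphVol μ) * graphInt μ f

/-- The `W^{1,2}(V)` norm, `(∫_V (|∇ f|² + f²) dμ)^{1/2}`. -/
noncomputable def sobolevNorm {V : Type*} [Fintype V] (ω : V → V → ℝ) (μ : V → ℝ)
    (f : V → ℝ) : ℝ :=
  Real.sqrt (graphInt μ (fun x => gradSq ω μ f x + f x ^ 2))

/-- `(u, v)` is a solution of the system `(S_λ)`. -/
def isSolution {V : Type*} [Fintype V] (ω : V → V → ℝ) (μ : V → ℝ)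
    (G H : ℝ → ℝ) (N1 N2 : ℕ) (u₀ v₀ : V → ℝ) (lam : ℝ) (u v : V → ℝ) : Prop :=
  ∀ x, graphLap ω μ u x =
      -lam * Real.exp (v₀ x + v x) * H (Real.exp (v₀ x + v x)) *
        primFun G (Real.exp (u₀ x + u x)) + 4 * Real.pi * N1 / graphVol μ ∧
    graphLap ω μ v x =
      -lam * Real.exp (u₀ x + u x) * G (Real.exp (u₀ x + u x)) *
        primFun H (Real.exp (v₀ x + v x)) + 4 * Real.pi * N2 / graphVol μ

/-- `(u, v)` is a lower solution of the system `(S_λ)`. -/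
def isLowerSolution {V : Type*} [Fintype V] (ω : V → V → ℝ) (μ : V → ℝ)
    (G H : ℝ → ℝ) (N1 N2 : ℕ) (u₀ v₀ : V → ℝ) (lam : ℝ) (u v : V → ℝ) : Prop :=
  ∀ x, graphLap ω μ u x ≥
      -lam * Real.exp (v₀ x + v x) * H (Real.exp (v₀ x + v x)) *
        primFun G (Real.exp (u₀ x + u x)) + 4 * Real.pi * N1 / graphVol μ ∧
    graphLap ω μ v x ≥
      -lam * Real.exp (u₀ x + u x) * G (Real.exp (u₀ x + u x)) *
        primFun H (Real.exp (v₀ x + v x)) + 4 * Real.pi * N2 / graphVol μ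

/-- `(uM, vM)` is a maximal solution of `(S_λ)`: it solves the system and any other
solution lies strictly below it. -/
def isMaximalSolution {V : Type*} [Fintype V] (ω : V → V → ℝ) (μ : V → ℝ)
    (G H : ℝ → ℝ) (N1 N2 : ℕ) (u₀ v₀ : V → ℝ) (lam : ℝ) (uM vM : V → ℝ) : Prop :=
  isSolution ω μ G H N1 N2 u₀ v₀ lam uM vM ∧
    ∀ u' v', isSolution ω μ G H N1 N2 u₀ v₀ lam u' v' → (u', v') ≠ (uM, vM) →
      ∀ x, u' x < uM x ∧ v' x < vM x

section PrimFun
variable {F : ℝ → ℝ}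

lemma intInt (hF : ContinuousOn F (Set.Ici 0)) {a b : ℝ} (ha : 0 ≤ a) (hb : 0 ≤ b) :
    IntervalIntegrable F MeasureTheory.volume a b := by
  apply ContinuousOn.intervalIntegrable
  apply hF.mono
  intro x hx
  exact le_trans (le_min ha hb) hx.1

lemma primFun_eq (hF : ContinuousOn F (Set.Ici 0)) {t : ℝ} (ht : 0 ≤ t) :
    primFun F t = ∫ r in t..(1 : ℝ), F r := by
  have h := intervalIntegral.integral_comp_smul_deriv' (f := fun s => s ^ 2)
    (f' := fun s => 2 * s) (g := F) (a := Real.sqrt t) (b := 1)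
    (fun x _ => by simpa using hasDerivAt_pow 2 x)
    (by fun_prop)
    (hF.mono (by rintro _ ⟨s, _, rfl⟩; exact sq_nonneg s))
  simp only [smul_eq_mul, Function.comp] at h
  rw [primFun, h, Real.sq_sqrt ht, one_pow]

lemma primFun_one : primFun F 1 = 0 := by
  rw [primFun, Real.sqrt_one, intervalIntegral.integral_same]

lemma primFun_sub (hF : ContinuousOn F (Set.Ici 0)) {t t' : ℝ} (ht : 0 ≤ t) (htt' : t ≤ t') :
    primFun F t - primFun F t' = ∫ r in t..t', F r := by
  rw [primFun_eq hF ht, primFun_eq hF (le_trans ht htt')]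
  have h := intervalIntegral.integral_add_adjacent_intervals
    (intInt hF ht (le_trans ht htt')) (intInt hF (le_trans ht htt') zero_le_one)
  linarith [h]

lemma primFun_nonneg (hF : ContinuousOn F (Set.Ici 0)) (hFpos : ∀ s, 0 ≤ s → 0 < F s)
    {t : ℝ} (ht : 0 ≤ t) (ht1 : t ≤ 1) : 0 ≤ primFun F t := by
  rw [primFun_eq hF ht]
  exact intervalIntegral.integral_nonneg ht1 (fun u hu => (hFpos u (le_trans ht hu.1)).le)

lemma primFun_pos (hF : ContinuousOn F (Set.Ici 0)) (hFpos : ∀ s, 0 ≤ s → 0 < F s)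
    {t : ℝ} (ht : 0 ≤ t) (ht1 : t < 1) : 0 < primFun F t := by
  rw [primFun_eq hF ht]
  exact intervalIntegral.intervalIntegral_pos_of_pos_on (intInt hF ht zero_le_one)
    (fun u hu => hFpos u (le_trans ht hu.1.le)) ht1

lemma primFun_neg (hF : ContinuousOn F (Set.Ici 0)) (hFpos : ∀ s, 0 ≤ s → 0 < F s)
    {t : ℝ} (ht1 : 1 < t) : primFun F t < 0 := by
  rw [primFun_eq hF (by linarith), intervalIntegral.integral_symm]
  have : 0 < ∫ r in (1:ℝ)..t, F r :=
    intervalIntegral.intervalIntegral_pos_of_pos_on (intInt hF zero_le_one (by linarith))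
      (fun u hu => hFpos u (by linarith [hu.1])) ht1
  linarith

lemma primFun_anti (hF : ContinuousOn F (Set.Ici 0)) (hFpos : ∀ s, 0 ≤ s → 0 < F s)
    {t t' : ℝ} (ht : 0 ≤ t) (htt' : t ≤ t') : primFun F t' ≤ primFun F t := by
  have h := primFun_sub hF ht htt'
  have h2 : 0 ≤ ∫ r in t..t', F r :=
    intervalIntegral.integral_nonneg htt' (fun u hu => (hFpos u (le_trans ht hu.1)).le)
  linarith

lemma primFun_diff_le (hF : ContinuousOn F (Set.Ici 0)) (hFm : MonotoneOn F (Set.Ici 0))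
    {t t' : ℝ} (ht : 0 ≤ t) (htt' : t ≤ t') (ht1 : t' ≤ 1) :
    primFun F t - primFun F t' ≤ F 1 * (t' - t) := by
  rw [primFun_sub hF ht htt']
  have h := intervalIntegral.integral_mono_on (μ := MeasureTheory.volume)
    (f := F) (g := fun _ => F 1) htt' (intInt hF ht (le_trans ht htt'))
    (intervalIntegrable_const)
    (fun u hu => hFm (le_trans ht hu.1) (Set.mem_Ici.mpr zero_le_one)
      (le_trans hu.2 ht1))
  simpa [mul_comm] using h

end PrimFun
section GraphLemmas
variable {V : Type*} [Fintype V] (ω : V → V → ℝ) (μ : V → ℝ)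

lemma lap_add (f g : V → ℝ) (x : V) :
    graphLap ω μ (fun y => f y + g y) x = graphLap ω μ f x + graphLap ω μ g x := by
  simp only [graphLap, ← mul_add, ← Finset.sum_add_distrib]
  congr 1
  exact Finset.sum_congr rfl (fun y _ => by ring)

lemma lap_sub (f g : V → ℝ) (x : V) :
    graphLap ω μ (fun y => f y - g y) x = graphLap ω μ f x - graphLap ω μ g x := by
  simp only [graphLap, ← mul_sub, ← Finset.sum_sub_distrib]
  congr 1
  exact Finset.sum_congr rfl (fun y _ => by ring)

lemma lap_neg (f : V → ℝ) (x : V) :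
    graphLap ω μ (fun y => -f y) x = -graphLap ω μ f x := by
  have := lap_sub ω μ (fun _ => (0:ℝ)) f x
  simp only [zero_sub] at this
  rw [this, graphLap]
  simp

lemma lap_smul (c : ℝ) (f : V → ℝ) (x : V) :
    graphLap ω μ (fun y => c * f y) x = c * graphLap ω μ f x := by
  simp only [graphLap]
  rw [show ∑ y, ω x y * (c * f y - c * f x) = c * ∑ y, ω x y * (f y - f x) by
    rw [Finset.mul_sum]; exact Finset.sum_congr rfl (fun y _ => by ring)]
  ring

lemma lap_nonpos_at_max (hω_nonneg : ∀ x y, 0 ≤ ω x y) (hμ : ∀ x, 0 < μ x)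
    {w : V → ℝ} {x : V} (hx : ∀ y, w y ≤ w x) :
    graphLap ω μ w x ≤ 0 := by
  have hsum : ∑ y, ω x y * (w y - w x) ≤ 0 :=
    Finset.sum_nonpos (fun y _ =>
      mul_nonpos_of_nonneg_of_nonpos (hω_nonneg x y) (by linarith [hx y]))
  have hμx := hμ x
  have h1 : 0 ≤ 1 / μ x := by positivity
  calc (1 / μ x) * ∑ y, ω x y * (w y - w x) ≤ (1 / μ x) * 0 :=
        mul_le_mul_of_nonneg_left hsum h1
    _ = 0 := mul_zero _

lemma neighbors_eq_at_max (hω_nonneg : ∀ x y, 0 ≤ ω x y) (hμ : ∀ x, 0 < μ x)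
    {w : V → ℝ} {x : V} (hx : ∀ y, w y ≤ w x)
    (h2 : 0 ≤ graphLap ω μ w x) : ∀ y, 0 < ω x y → w y = w x := by
  have hμx := hμ x
  have h1 : 0 < 1 / μ x := by positivity
  have hS : 0 ≤ ∑ y, ω x y * (w y - w x) :=
    (mul_nonneg_iff_of_pos_left h1).mp h2
  have hterms : ∀ y ∈ Finset.univ, ω x y * (w y - w x) ≤ 0 := fun y _ =>
    mul_nonpos_of_nonneg_of_nonpos (hω_nonneg x y) (by linarith [hx y])
  have hzero : ∀ y ∈ Finset.univ, ω x y * (w y - w x) = 0 := by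
    rw [← Finset.sum_eq_zero_iff_of_nonpos hterms]
    exact le_antisymm (Finset.sum_nonpos hterms) hS
  intro y hy
  have := hzero y (Finset.mem_univ y)
  rcases mul_eq_zero.mp this with h | h
  · exact absurd h (ne_of_gt hy)
  · linarith

lemma graph_mp [Nonempty V] (hω_nonneg : ∀ x y, 0 ≤ ω x y) (hμ : ∀ x, 0 < μ x)
    {K : ℝ} (hK : 0 < K) (w : V → ℝ)
    (h : ∀ x, K * w x ≤ graphLap ω μ w x) : ∀ x, w x ≤ 0 := by
  obtain ⟨x0, hx0⟩ := Finite.exists_max w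
  have hlap := lap_nonpos_at_max ω μ hω_nonneg hμ hx0
  have hKw : K * w x0 ≤ 0 := le_trans (h x0) hlap
  have hw0 : w x0 ≤ 0 := by nlinarith
  exact fun x => le_trans (hx0 x) hw0

end GraphLemmas
section C
variable {V : Type*} [Fintype V] (ω : V → V → ℝ) (μ : V → ℝ)

lemma graph_propagate
    (hconn : ∀ x y : V, x ≠ y → ∃ (n : ℕ) (c : Fin (n + 1) → V),
      c 0 = x ∧ c (Fin.last n) = y ∧ ∀ i : Fin n, 0 < ω (c i.castSucc) (c i.succ))
    (S : Set V) (hne : S.Nonempty)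
    (hstep : ∀ z ∈ S, ∀ y, 0 < ω z y → y ∈ S) : ∀ y, y ∈ S := by
  obtain ⟨x, hx⟩ := hne
  intro y
  by_cases hxy : x = y
  · exact hxy ▸ hx
  obtain ⟨n, c, hc0, hclast, hpath⟩ := hconn x y hxy
  have key : ∀ k : ℕ, (hk : k ≤ n) → c ⟨k, by omega⟩ ∈ S := by
    intro k
    induction k with
    | zero =>
      intro _
      have h0 : (⟨0, by omega⟩ : Fin (n + 1)) = 0 := rfl
      rw [h0, hc0]; exact hx
    | succ k ih =>
      intro hk
      have hmem := ih (by omega)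
      have hp := hpath ⟨k, by omega⟩
      have h1 : (Fin.castSucc ⟨k, by omega⟩ : Fin (n + 1)) = ⟨k, by omega⟩ := rfl
      have h2 : (Fin.succ ⟨k, by omega⟩ : Fin (n + 1)) = ⟨k + 1, by omega⟩ := rfl
      rw [h1, h2] at hp
      exact hstep _ hmem _ hp
  have := key n le_rfl
  have hlast : (⟨n, by omega⟩ : Fin (n + 1)) = Fin.last n := rfl
  rwa [hlast, hclast] at this

-- now the solver
lemma lap_linear_unique [Nonempty V] (hω_nonneg : ∀ x y, 0 ≤ ω x y) (hμ : ∀ x, 0 < μ x)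
    {K : ℝ} (hK : 0 < K) (w : V → ℝ)
    (h : ∀ x, K * w x - graphLap ω μ w x = 0) : w = 0 := by
  have h1 : ∀ x, w x ≤ 0 := by
    apply graph_mp ω μ hω_nonneg hμ hK
    intro x; linarith [h x]
  have h2 : ∀ x, -w x ≤ 0 := by
    apply graph_mp ω μ hω_nonneg hμ hK
    intro x
    rw [lap_neg ω μ w x]
    linarith [h x]
  funext x
  have := h1 x; have := h2 x
  simp only [Pi.zero_apply]
  linarith

lemma exists_solver [Nonempty V] (hω_nonneg : ∀ x y, 0 ≤ ω x y) (hμ : ∀ x, 0 < μ x)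
    {K : ℝ} (hK : 0 < K) :
    ∃ Sol : (V → ℝ) → (V → ℝ), ∀ rhs : V → ℝ, ∀ x,
      K * Sol rhs x - graphLap ω μ (Sol rhs) x = rhs x := by
  classical
  let lapLM : (V → ℝ) →ₗ[ℝ] (V → ℝ) :=
    { toFun := fun f => graphLap ω μ f
      map_add' := fun f g => funext fun x => lap_add ω μ f g x
      map_smul' := fun c f => funext fun x => by
        exact lap_smul ω μ c f x }
  let L : (V → ℝ) →ₗ[ℝ] (V → ℝ) := K • LinearMap.id - lapLM
  have hLapp : ∀ w x, L w x = K * w x - graphLap ω μ w x := fun w x => by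
    simp [L, lapLM]
  have hinj : Function.Injective L := by
    rw [← LinearMap.ker_eq_bot, LinearMap.ker_eq_bot']
    intro w hw
    exact lap_linear_unique ω μ hω_nonneg hμ hK w
      (fun x => by rw [← hLapp w x, hw]; rfl)
  have hsurj : Function.Surjective L := LinearMap.injective_iff_surjective.mp hinj
  refine ⟨fun rhs => Function.surjInv hsurj rhs, fun rhs x => ?_⟩
  have := Function.surjInv_eq hsurj rhs
  rw [← hLapp, this]

end C
section KeyIneq

lemma exp_diff_le {a a' : ℝ} (h : a ≤ a') (h' : a' ≤ 0) :
    Real.exp a' - Real.exp a ≤ a' - a := by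
  have h1 := Real.add_one_le_exp (a - a')
  have h2 : Real.exp a = Real.exp a' * Real.exp (a - a') := by
    rw [← Real.exp_add]; ring_nf
  have h3 : Real.exp a' ≤ 1 := by
    have := Real.exp_le_exp.mpr h'
    simpa using this
  have h4 : Real.exp (a - a') ≤ 1 := by
    have := Real.exp_le_exp.mpr (show a - a' ≤ 0 by linarith)
    simpa using this
  have h6 : Real.exp a' * (1 - Real.exp (a - a')) ≤ 1 * (1 - Real.exp (a - a')) :=
    mul_le_mul_of_nonneg_right h3 (by linarith)
  have hid : Real.exp a' - Real.exp a = Real.exp a' * (1 - Real.exp (a - a')) := by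
    rw [h2]; ring
  linarith

lemma keyIneq (E F : ℝ → ℝ) (hEc : ContinuousOn E (Set.Ici 0))
    (hEpos : ∀ s, 0 ≤ s → 0 < E s) (hEm : MonotoneOn E (Set.Ici 0))
    (hFpos : ∀ s, 0 ≤ s → 0 < F s) (hFm : MonotoneOn F (Set.Ici 0))
    {lam K : ℝ} (hlam : 0 < lam) (hK : lam * (E 1 * F 1) ≤ K)
    {a a' b b' : ℝ} (haa : a ≤ a') (ha0 : a' ≤ 0) (hbb : b ≤ b') (hb0 : b' ≤ 0) :
    K * a + lam * (Real.exp b * F (Real.exp b) * primFun E (Real.exp a)) ≤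
      K * a' + lam * (Real.exp b' * F (Real.exp b') * primFun E (Real.exp a')) := by
  have hea : (0:ℝ) < Real.exp a := Real.exp_pos a
  have hea' : (0:ℝ) < Real.exp a' := Real.exp_pos a'
  have heaa : Real.exp a ≤ Real.exp a' := Real.exp_le_exp.mpr haa
  have hea1 : Real.exp a' ≤ 1 := by simpa using Real.exp_le_exp.mpr ha0
  have heb : (0:ℝ) < Real.exp b := Real.exp_pos b
  have heb' : (0:ℝ) < Real.exp b' := Real.exp_pos b'
  have hebb : Real.exp b ≤ Real.exp b' := Real.exp_le_exp.mpr hbb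
  have heb1 : Real.exp b' ≤ 1 := by simpa using Real.exp_le_exp.mpr hb0
  set Bs := Real.exp b * F (Real.exp b) with hBs
  set Bb := Real.exp b' * F (Real.exp b') with hBb
  set gA := primFun E (Real.exp a) with hgA
  set gA' := primFun E (Real.exp a') with hgA'
  have hE1 : 0 < E 1 := hEpos 1 zero_le_one
  have hF1 : 0 < F 1 := hFpos 1 zero_le_one
  have hg0 : 0 ≤ gA := primFun_nonneg hEc hEpos hea.le (le_trans heaa hea1)
  have hganti : gA' ≤ gA := primFun_anti hEc hEpos hea.le heaa
  have hgd : gA - gA' ≤ E 1 * (a' - a) := by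
    have h1 : gA - gA' ≤ E 1 * (Real.exp a' - Real.exp a) :=
      primFun_diff_le hEc hEm hea.le heaa hea1
    have h2 : E 1 * (Real.exp a' - Real.exp a) ≤ E 1 * (a' - a) :=
      mul_le_mul_of_nonneg_left (exp_diff_le haa ha0) hE1.le
    linarith
  have hBsb : Bs ≤ Bb := by
    apply mul_le_mul hebb (hFm (Set.mem_Ici.mpr heb.le) (Set.mem_Ici.mpr heb'.le) hebb)
      (hFpos _ heb.le).le heb'.le
  have hBb1 : Bb ≤ F 1 := by
    have hF' : F (Real.exp b') ≤ F 1 :=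
      hFm (Set.mem_Ici.mpr heb'.le) (Set.mem_Ici.mpr zero_le_one) heb1
    calc Bb ≤ 1 * F 1 := mul_le_mul heb1 hF' (hFpos _ heb'.le).le zero_le_one
      _ = F 1 := one_mul _
  have h1 : 0 ≤ lam * ((Bb - Bs) * gA) :=
    mul_nonneg hlam.le (mul_nonneg (by linarith) hg0)
  have h2 : Bb * (gA - gA') ≤ F 1 * (E 1 * (a' - a)) := by
    apply mul_le_mul hBb1 hgd (by linarith)
    exact hF1.le
  have h3 : lam * (Bb * (gA - gA')) ≤ lam * (F 1 * (E 1 * (a' - a))) :=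
    mul_le_mul_of_nonneg_left h2 hlam.le
  have h5 : lam * (F 1 * (E 1 * (a' - a))) = (lam * (E 1 * F 1)) * (a' - a) := by ring
  have h6 : (lam * (E 1 * F 1)) * (a' - a) ≤ K * (a' - a) :=
    mul_le_mul_of_nonneg_right hK (by linarith)
  have hid : lam * (Bs * gA) - lam * (Bb * gA') =
      lam * (Bb * (gA - gA')) - lam * ((Bb - Bs) * gA) := by ring
  linarith

end KeyIneq
section APB
variable {V : Type*} [Fintype V] [DecidableEq V]

/-- A priori bound for lower solutions (non-strict). -/
lemma apb_low [Nonempty V] (ω : V → V → ℝ) (μ : V → ℝ)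
    (hω_nonneg : ∀ x y, 0 ≤ ω x y) (hμ : ∀ x, 0 < μ x)
    (E F : ℝ → ℝ) (hEc : ContinuousOn E (Set.Ici 0))
    (hEpos : ∀ s, 0 ≤ s → 0 < E s) (hFpos : ∀ s, 0 ≤ s → 0 < F s)
    {lam : ℝ} (hlam : 0 < lam) {N : ℕ} (p : Fin N → V)
    (a₀ b₀ a b : V → ℝ)
    (hlap₀ : ∀ x, graphLap ω μ a₀ x =
      -(4 * Real.pi * N) / graphVol μ + 4 * Real.pi * ∑ j, diracDelta μ (p j) x)
    (hsol : ∀ x, graphLap ω μ a x ≥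
      -lam * Real.exp (b₀ x + b x) * F (Real.exp (b₀ x + b x)) *
        primFun E (Real.exp (a₀ x + a x)) + 4 * Real.pi * N / graphVol μ) :
    ∀ x, a₀ x + a x ≤ 0 := by
  have hπ : (0:ℝ) < Real.pi := Real.pi_pos
  have hδ : ∀ x, 0 ≤ ∑ j, diracDelta μ (p j) x := by
    intro x
    apply Finset.sum_nonneg
    intro j _
    unfold diracDelta
    split
    · have := hμ (p j); positivity
    · exact le_rfl
  obtain ⟨x0, hx0⟩ := Finite.exists_max (fun x => a₀ x + a x)
  have hx0' : ∀ x, a₀ x + a x ≤ a₀ x0 + a x0 := hx0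
  have hmax : graphLap ω μ (fun y => a₀ y + a y) x0 ≤ 0 :=
    lap_nonpos_at_max ω μ hω_nonneg hμ hx0'
  rw [lap_add] at hmax
  have h1 := hlap₀ x0
  rw [neg_div] at h1
  have h2 := hsol x0
  have hBpos : 0 < Real.exp (b₀ x0 + b x0) * F (Real.exp (b₀ x0 + b x0)) :=
    mul_pos (Real.exp_pos _) (hFpos _ (Real.exp_pos _).le)
  have hg : 0 ≤ primFun E (Real.exp (a₀ x0 + a x0)) := by
    have h3 : 0 ≤ lam * Real.exp (b₀ x0 + b x0) * F (Real.exp (b₀ x0 + b x0)) *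
        primFun E (Real.exp (a₀ x0 + a x0)) := by
      nlinarith [mul_nonneg hπ.le (hδ x0)]
    have h4 : lam * Real.exp (b₀ x0 + b x0) * F (Real.exp (b₀ x0 + b x0)) *
        primFun E (Real.exp (a₀ x0 + a x0)) =
        (lam * (Real.exp (b₀ x0 + b x0) * F (Real.exp (b₀ x0 + b x0)))) *
        primFun E (Real.exp (a₀ x0 + a x0)) := by ring
    rw [h4] at h3
    exact (mul_nonneg_iff_of_pos_left (mul_pos hlam hBpos)).mp h3
  have hw0 : a₀ x0 + a x0 ≤ 0 := by
    by_contra hcon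
    push_neg at hcon
    have : primFun E (Real.exp (a₀ x0 + a x0)) < 0 :=
      primFun_neg hEc hEpos (Real.one_lt_exp_iff.mpr hcon)
    linarith
  exact fun x => le_trans (hx0' x) hw0

/-- A priori strict bound for solutions. -/
lemma apb_strict [Nonempty V] (ω : V → V → ℝ) (μ : V → ℝ)
    (hω_nonneg : ∀ x y, 0 ≤ ω x y) (hμ : ∀ x, 0 < μ x)
    (hconn : ∀ x y : V, x ≠ y → ∃ (n : ℕ) (c : Fin (n + 1) → V),
      c 0 = x ∧ c (Fin.last n) = y ∧ ∀ i : Fin n, 0 < ω (c i.castSucc) (c i.succ))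
    (E F : ℝ → ℝ) (hEc : ContinuousOn E (Set.Ici 0))
    (hEpos : ∀ s, 0 ≤ s → 0 < E s) (hFpos : ∀ s, 0 ≤ s → 0 < F s)
    {lam : ℝ} (hlam : 0 < lam) {N : ℕ} (hN : 0 < N) (p : Fin N → V)
    (a₀ b₀ a b : V → ℝ)
    (hlap₀ : ∀ x, graphLap ω μ a₀ x =
      -(4 * Real.pi * N) / graphVol μ + 4 * Real.pi * ∑ j, diracDelta μ (p j) x)
    (hsol : ∀ x, graphLap ω μ a x =
      -lam * Real.exp (b₀ x + b x) * F (Real.exp (b₀ x + b x)) *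
        primFun E (Real.exp (a₀ x + a x)) + 4 * Real.pi * N / graphVol μ) :
    ∀ x, a₀ x + a x < 0 := by
  have hπ : (0:ℝ) < Real.pi := Real.pi_pos
  have hδ : ∀ x, 0 ≤ ∑ j, diracDelta μ (p j) x := by
    intro x
    apply Finset.sum_nonneg
    intro j _
    unfold diracDelta
    split
    · have := hμ (p j); positivity
    · exact le_rfl
  have hlapw : ∀ x, graphLap ω μ (fun y => a₀ y + a y) x =
      4 * Real.pi * ∑ j, diracDelta μ (p j) x
      - lam * Real.exp (b₀ x + b x) * F (Real.exp (b₀ x + b x)) *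
        primFun E (Real.exp (a₀ x + a x)) := by
    intro x
    rw [lap_add, hlap₀ x, hsol x]
    ring
  obtain ⟨x0, hx0⟩ := Finite.exists_max (fun x => a₀ x + a x)
  have hx0' : ∀ x, a₀ x + a x ≤ a₀ x0 + a x0 := hx0
  have hw0 : a₀ x0 + a x0 < 0 := by
    rcases lt_trichotomy (a₀ x0 + a x0) 0 with hlt | heq | hgt
    · exact hlt
    · exfalso
      have hall : ∀ z, z ∈ {z : V | a₀ z + a z = 0} := by
        apply graph_propagate ω hconn _ ⟨x0, heq⟩
        intro z hz y hy
        simp only [Set.mem_setOf_eq] at hz ⊢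
        have hzmax : ∀ y, (fun y => a₀ y + a y) y ≤ (fun y => a₀ y + a y) z := by
          intro y
          simp only
          rw [hz]
          linarith [hx0' y]
        have hge : 0 ≤ graphLap ω μ (fun y => a₀ y + a y) z := by
          rw [hlapw z, hz, Real.exp_zero, primFun_one]
          nlinarith [mul_nonneg hπ.le (hδ z)]
        have h5 := neighbors_eq_at_max ω μ hω_nonneg hμ hzmax hge y hy
        have h6 : a₀ y + a y = a₀ z + a z := h5
        rw [hz] at h6
        exact h6
      have hconstlap : graphLap ω μ (fun y => a₀ y + a y) (p ⟨0, hN⟩) = 0 := by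
        rw [graphLap, Finset.sum_eq_zero]
        · ring
        · intro y _
          have h1 := hall y; have h2 := hall (p ⟨0, hN⟩)
          simp only [Set.mem_setOf_eq] at h1 h2
          rw [h1, h2]; ring
      have hδpos : 0 < ∑ j, diracDelta μ (p j) (p ⟨0, hN⟩) := by
        have hterm : ∀ j : Fin N, 0 ≤ diracDelta μ (p j) (p ⟨0, hN⟩) := by
          intro j
          unfold diracDelta
          split
          · have := hμ (p j); positivity
          · exact le_rfl
        have hone : 0 < diracDelta μ (p ⟨0, hN⟩) (p ⟨0, hN⟩) := by
          unfold diracDelta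
          rw [if_pos rfl]
          have := hμ (p ⟨0, hN⟩)
          positivity
        exact Finset.sum_pos' (fun j _ => hterm j) ⟨⟨0, hN⟩, Finset.mem_univ _, hone⟩
      have h2 := hall (p ⟨0, hN⟩)
      simp only [Set.mem_setOf_eq] at h2
      have h3 := hlapw (p ⟨0, hN⟩)
      rw [hconstlap, h2, Real.exp_zero, primFun_one] at h3
      nlinarith [mul_pos hπ hδpos]
    · exfalso
      have hmax := lap_nonpos_at_max ω μ hω_nonneg hμ
        (w := fun y => a₀ y + a y) (x := x0) hx0'
      have hg : primFun E (Real.exp (a₀ x0 + a x0)) < 0 :=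
        primFun_neg hEc hEpos (Real.one_lt_exp_iff.mpr hgt)
      have hBpos : 0 < Real.exp (b₀ x0 + b x0) * F (Real.exp (b₀ x0 + b x0)) :=
        mul_pos (Real.exp_pos _) (hFpos _ (Real.exp_pos _).le)
      have h3 := hlapw x0
      nlinarith [mul_nonneg hπ.le (hδ x0),
        mul_pos (mul_pos hlam hBpos) (neg_pos.mpr hg)]
  exact fun x => lt_of_le_of_lt (hx0' x) hw0

end APB

set_option maxHeartbeats 1600000 in
theorem stmt_5
    {V : Type*} [Fintype V] [DecidableEq V]
    (hV : 1 < Fintype.card V)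
    (ω : V → V → ℝ) (μ : V → ℝ)
    (hω_nonneg : ∀ x y, 0 ≤ ω x y)
    (hω_symm : ∀ x y, ω x y = ω y x)
    (hω_diag : ∀ x, ω x x = 0)
    (hconn : ∀ x y : V, x ≠ y → ∃ (n : ℕ) (c : Fin (n + 1) → V),
      c 0 = x ∧ c (Fin.last n) = y ∧ ∀ i : Fin n, 0 < ω (c i.castSucc) (c i.succ))
    (hμ : ∀ x, 0 < μ x)
    (G H : ℝ → ℝ)
    (hGpos : ∀ s, 0 ≤ s → 0 < G s) (hHpos : ∀ s, 0 ≤ s → 0 < H s)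
    (hGmono : StrictMonoOn G (Set.Ici 0)) (hHmono : StrictMonoOn H (Set.Ici 0))
    (hGsmooth : ContDiffOn ℝ (⊤ : ℕ∞) G (Set.Ici 0)) (hHsmooth : ContDiffOn ℝ (⊤ : ℕ∞) H (Set.Ici 0))
    (N1 N2 : ℕ) (hN1 : 0 < N1) (hN2 : 0 < N2)
    (p1 : Fin N1 → V) (p2 : Fin N2 → V)
    (u₀ v₀ : V → ℝ)
    (hu₀ : ∀ x, graphLap ω μ u₀ x =
      -(4 * Real.pi * N1) / graphVol μ + 4 * Real.pi * ∑ j, diracDelta μ (p1 j) x)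
    (hv₀ : ∀ x, graphLap ω μ v₀ x =
      -(4 * Real.pi * N2) / graphVol μ + 4 * Real.pi * ∑ j, diracDelta μ (p2 j) x)
    (lam : ℝ) (hlam : 0 < lam)
    (hlow : ∃ uLow vLow : V → ℝ, isLowerSolution ω μ G H N1 N2 u₀ v₀ lam uLow vLow) :
    ∃ uM vM : V → ℝ, isMaximalSolution ω μ G H N1 N2 u₀ v₀ lam uM vM ∧
      ∀ x, u₀ x + uM x < 0 ∧ v₀ x + vM x < 0 := by
  classical
  obtain ⟨uL, vL, hlowsol⟩ := hlow
  have hNV : Nonempty V := Fintype.card_pos_iff.mp (by omega)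
  have hG1 : 0 < G 1 := hGpos 1 zero_le_one
  have hH1 : 0 < H 1 := hHpos 1 zero_le_one
  have hGc : ContinuousOn G (Set.Ici 0) := hGsmooth.continuousOn
  have hHc : ContinuousOn H (Set.Ici 0) := hHsmooth.continuousOn
  have hGm : MonotoneOn G (Set.Ici 0) := hGmono.monotoneOn
  have hHm : MonotoneOn H (Set.Ici 0) := hHmono.monotoneOn
  set K : ℝ := lam * (G 1 * H 1) with hKdef
  have hK : 0 < K := by positivity
  obtain ⟨Sol, hSol⟩ := exists_solver ω μ hω_nonneg hμ hK
  -- nonlinearities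
  set F1 : (V → ℝ) → (V → ℝ) → V → ℝ := fun u v x =>
    -lam * Real.exp (v₀ x + v x) * H (Real.exp (v₀ x + v x)) *
      primFun G (Real.exp (u₀ x + u x)) + 4 * Real.pi * N1 / graphVol μ with hF1def
  set F2 : (V → ℝ) → (V → ℝ) → V → ℝ := fun u v x =>
    -lam * Real.exp (u₀ x + u x) * G (Real.exp (u₀ x + u x)) *
      primFun H (Real.exp (v₀ x + v x)) + 4 * Real.pi * N2 / graphVol μ with hF2def
  set T1 : (V → ℝ) → (V → ℝ) → V → ℝ := fun u v => Sol (fun x => K * u x - F1 u v x)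
    with hT1def
  set T2 : (V → ℝ) → (V → ℝ) → V → ℝ := fun u v => Sol (fun x => K * v x - F2 u v x)
    with hT2def
  have hT1 : ∀ u v x, K * T1 u v x - graphLap ω μ (T1 u v) x = K * u x - F1 u v x :=
    fun u v x => hSol _ x
  have hT2 : ∀ u v x, K * T2 u v x - graphLap ω μ (T2 u v) x = K * v x - F2 u v x :=
    fun u v x => hSol _ x
  have huniq : ∀ w : V → ℝ, (∀ x, K * w x - graphLap ω μ w x = 0) → ∀ x, w x = 0 :=
    fun w h x => congrFun (lap_linear_unique ω μ hω_nonneg hμ hK w h) x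
  have hMP : ∀ w : V → ℝ, (∀ x, K * w x - graphLap ω μ w x ≤ 0) → ∀ x, w x ≤ 0 :=
    fun w h => graph_mp ω μ hω_nonneg hμ hK w (fun x => by linarith [h x])
  have hLsub : ∀ f g : V → ℝ, ∀ x, K * (f x - g x) - graphLap ω μ (fun y => f y - g y) x
      = (K * f x - graphLap ω μ f x) - (K * g x - graphLap ω μ g x) := by
    intro f g x; rw [lap_sub]; ring
  -- monotonicity of T
  have hmono1 : ∀ u v u' v' : V → ℝ, (∀ x, u x ≤ u' x) → (∀ x, v x ≤ v' x) →
      (∀ x, u₀ x + u' x ≤ 0) → (∀ x, v₀ x + v' x ≤ 0) →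
      ∀ x, T1 u v x ≤ T1 u' v' x := by
    intro u v u' v' huu hvv hu0 hv0
    have h := hMP (fun x => T1 u v x - T1 u' v' x) ?_
    · intro x; linarith [h x]
    intro x
    rw [hLsub (T1 u v) (T1 u' v') x, hT1, hT1]
    have key := keyIneq G H hGc hGpos hGm hHpos hHm hlam (K := K) (le_of_eq hKdef.symm)
      (a := u₀ x + u x) (a' := u₀ x + u' x) (b := v₀ x + v x) (b' := v₀ x + v' x)
      (by linarith [huu x]) (hu0 x) (by linarith [hvv x]) (hv0 x)
    simp only [hF1def]
    linarith [key]
  have hmono2 : ∀ u v u' v' : V → ℝ, (∀ x, u x ≤ u' x) → (∀ x, v x ≤ v' x) →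
      (∀ x, u₀ x + u' x ≤ 0) → (∀ x, v₀ x + v' x ≤ 0) →
      ∀ x, T2 u v x ≤ T2 u' v' x := by
    intro u v u' v' huu hvv hu0 hv0
    have h := hMP (fun x => T2 u v x - T2 u' v' x) ?_
    · intro x; linarith [h x]
    intro x
    rw [hLsub (T2 u v) (T2 u' v') x, hT2, hT2]
    have key := keyIneq H G hHc hHpos hHm hGpos hGm hlam
      (K := K) (le_of_eq (show lam * (H 1 * G 1) = K by rw [hKdef]; ring))
      (a := v₀ x + v x) (a' := v₀ x + v' x) (b := u₀ x + u x) (b' := u₀ x + u' x)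
      (by linarith [hvv x]) (hv0 x) (by linarith [huu x]) (hu0 x)
    simp only [hF2def]
    linarith [key]
  -- basic positivity facts
  have hπ : (0:ℝ) < Real.pi := Real.pi_pos
  have hδ1 : ∀ x, 0 ≤ ∑ j, diracDelta μ (p1 j) x := by
    intro x
    apply Finset.sum_nonneg
    intro j _
    unfold diracDelta
    split
    · have := hμ (p1 j); positivity
    · exact le_rfl
  have hδ2 : ∀ x, 0 ≤ ∑ j, diracDelta μ (p2 j) x := by
    intro x
    apply Finset.sum_nonneg
    intro j _
    unfold diracDelta
    split
    · have := hμ (p2 j); positivity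
    · exact le_rfl
  -- the upper solution
  set ub1 : V → ℝ := fun x => -u₀ x with hub1def
  set ub2 : V → ℝ := fun x => -v₀ x with hub2def
  have hub1v : ∀ x, u₀ x + ub1 x = 0 := fun x => by simp [hub1def]
  have hub2v : ∀ x, v₀ x + ub2 x = 0 := fun x => by simp [hub2def]
  have hF1ub : ∀ v : V → ℝ, ∀ x, F1 ub1 v x = 4 * Real.pi * N1 / graphVol μ := by
    intro v x
    simp only [hF1def]
    rw [hub1v x, Real.exp_zero, primFun_one]
    ring
  have hF2ub : ∀ u : V → ℝ, ∀ x, F2 u ub2 x = 4 * Real.pi * N2 / graphVol μ := by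
    intro u x
    simp only [hF2def]
    rw [hub2v x, Real.exp_zero, primFun_one]
    ring
  have hlapub1 : ∀ x, graphLap ω μ ub1 x =
      4 * Real.pi * N1 / graphVol μ - 4 * Real.pi * ∑ j, diracDelta μ (p1 j) x := by
    intro x
    have := lap_neg ω μ u₀ x
    rw [hub1def, this, hu₀ x]
    ring
  have hlapub2 : ∀ x, graphLap ω μ ub2 x =
      4 * Real.pi * N2 / graphVol μ - 4 * Real.pi * ∑ j, diracDelta μ (p2 j) x := by
    intro x
    have := lap_neg ω μ v₀ x
    rw [hub2def, this, hv₀ x]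
    ring
  -- T maps the upper solution down
  have hTub1 : ∀ v : V → ℝ, ∀ x, T1 ub1 v x ≤ ub1 x := by
    intro v
    have h := hMP (fun x => T1 ub1 v x - ub1 x) ?_
    · intro x; linarith [h x]
    intro x
    rw [hLsub (T1 ub1 v) ub1 x, hT1, hF1ub v x, hlapub1 x]
    nlinarith [mul_nonneg hπ.le (hδ1 x)]
  have hTub2 : ∀ u : V → ℝ, ∀ x, T2 u ub2 x ≤ ub2 x := by
    intro u
    have h := hMP (fun x => T2 u ub2 x - ub2 x) ?_
    · intro x; linarith [h x]
    intro x
    rw [hLsub (T2 u ub2) ub2 x, hT2, hF2ub u x, hlapub2 x]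
    nlinarith [mul_nonneg hπ.le (hδ2 x)]
  -- lower solution inequalities in F-form
  have hlow1 : ∀ x, F1 uL vL x ≤ graphLap ω μ uL x := by
    intro x
    have := (hlowsol x).1
    simp only [hF1def]
    exact this
  have hlow2 : ∀ x, F2 uL vL x ≤ graphLap ω μ vL x := by
    intro x
    have := (hlowsol x).2
    simp only [hF2def]
    exact this
  -- lower solution is below the upper solution
  have hwL1 : ∀ x, u₀ x + uL x ≤ 0 :=
    apb_low ω μ hω_nonneg hμ G H hGc hGpos hHpos hlam p1 u₀ v₀ uL vL hu₀
      (fun x => (hlowsol x).1)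
  have hwL2 : ∀ x, v₀ x + vL x ≤ 0 :=
    apb_low ω μ hω_nonneg hμ H G hHc hHpos hGpos hlam p2 v₀ u₀ vL uL hv₀
      (fun x => (hlowsol x).2)
  have hLub1 : ∀ x, uL x ≤ ub1 x := fun x => by
    have := hwL1 x; simp only [hub1def]; linarith
  have hLub2 : ∀ x, vL x ≤ ub2 x := fun x => by
    have := hwL2 x; simp only [hub2def]; linarith
  -- lower solution moves up under T
  have hLT1 : ∀ x, uL x ≤ T1 uL vL x := by
    have h := hMP (fun x => uL x - T1 uL vL x) ?_
    · intro x; linarith [h x]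
    intro x
    rw [hLsub uL (T1 uL vL) x, hT1]
    linarith [hlow1 x]
  have hLT2 : ∀ x, vL x ≤ T2 uL vL x := by
    have h := hMP (fun x => vL x - T2 uL vL x) ?_
    · intro x; linarith [h x]
    intro x
    rw [hLsub vL (T2 uL vL) x, hT2]
    linarith [hlow2 x]
  -- the set of sub-fixed-points and its pointwise supremum
  set S : Set ((V → ℝ) × (V → ℝ)) := {p | (∀ x, p.1 x ≤ ub1 x) ∧ (∀ x, p.2 x ≤ ub2 x) ∧
      (∀ x, p.1 x ≤ T1 p.1 p.2 x) ∧ (∀ x, p.2 x ≤ T2 p.1 p.2 x)} with hSdef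
  have hSne : (uL, vL) ∈ S := ⟨hLub1, hLub2, hLT1, hLT2⟩
  set P1 : V → ℝ := fun x => sSup ((fun p : (V → ℝ) × (V → ℝ) => p.1 x) '' S) with hP1def
  set P2 : V → ℝ := fun x => sSup ((fun p : (V → ℝ) × (V → ℝ) => p.2 x) '' S) with hP2def
  have hbdd1 : ∀ x, BddAbove ((fun p : (V → ℝ) × (V → ℝ) => p.1 x) '' S) := fun x =>
    ⟨ub1 x, by rintro _ ⟨p, hp, rfl⟩; exact hp.1 x⟩
  have hbdd2 : ∀ x, BddAbove ((fun p : (V → ℝ) × (V → ℝ) => p.2 x) '' S) := fun x =>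
    ⟨ub2 x, by rintro _ ⟨p, hp, rfl⟩; exact hp.2.1 x⟩
  have hne1 : ∀ x, ((fun p : (V → ℝ) × (V → ℝ) => p.1 x) '' S).Nonempty :=
    fun x => ⟨uL x, ⟨(uL, vL), hSne, rfl⟩⟩
  have hne2 : ∀ x, ((fun p : (V → ℝ) × (V → ℝ) => p.2 x) '' S).Nonempty :=
    fun x => ⟨vL x, ⟨(uL, vL), hSne, rfl⟩⟩
  have hle1 : ∀ p ∈ S, ∀ x, p.1 x ≤ P1 x := fun p hp x =>
    le_csSup (hbdd1 x) ⟨p, hp, rfl⟩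
  have hle2 : ∀ p ∈ S, ∀ x, p.2 x ≤ P2 x := fun p hp x =>
    le_csSup (hbdd2 x) ⟨p, hp, rfl⟩
  have hP1ub : ∀ x, P1 x ≤ ub1 x := fun x =>
    csSup_le (hne1 x) (by rintro _ ⟨p, hp, rfl⟩; exact hp.1 x)
  have hP2ub : ∀ x, P2 x ≤ ub2 x := fun x =>
    csSup_le (hne2 x) (by rintro _ ⟨p, hp, rfl⟩; exact hp.2.1 x)
  have hiP1 : ∀ x, u₀ x + P1 x ≤ 0 := fun x => by
    have := hP1ub x; simp only [hub1def] at this; linarith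
  have hiP2 : ∀ x, v₀ x + P2 x ≤ 0 := fun x => by
    have := hP2ub x; simp only [hub2def] at this; linarith
  have hiub1 : ∀ x, u₀ x + ub1 x ≤ 0 := fun x => le_of_eq (hub1v x)
  have hiub2 : ∀ x, v₀ x + ub2 x ≤ 0 := fun x => le_of_eq (hub2v x)
  -- P ≤ T P
  have hPT1 : ∀ x, P1 x ≤ T1 P1 P2 x := by
    intro x
    apply csSup_le (hne1 x)
    rintro _ ⟨p, hp, rfl⟩
    calc p.1 x ≤ T1 p.1 p.2 x := hp.2.2.1 x
      _ ≤ T1 P1 P2 x := hmono1 p.1 p.2 P1 P2 (hle1 p hp) (hle2 p hp) hiP1 hiP2 x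
  have hPT2 : ∀ x, P2 x ≤ T2 P1 P2 x := by
    intro x
    apply csSup_le (hne2 x)
    rintro _ ⟨p, hp, rfl⟩
    calc p.2 x ≤ T2 p.1 p.2 x := hp.2.2.2 x
      _ ≤ T2 P1 P2 x := hmono2 p.1 p.2 P1 P2 (hle1 p hp) (hle2 p hp) hiP1 hiP2 x
  -- T P ≤ ub
  have hTP1ub : ∀ x, T1 P1 P2 x ≤ ub1 x := fun x =>
    le_trans (hmono1 P1 P2 ub1 ub2 hP1ub hP2ub hiub1 hiub2 x) (hTub1 ub2 x)
  have hTP2ub : ∀ x, T2 P1 P2 x ≤ ub2 x := fun x =>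
    le_trans (hmono2 P1 P2 ub1 ub2 hP1ub hP2ub hiub1 hiub2 x) (hTub2 ub1 x)
  have hiTP1 : ∀ x, u₀ x + T1 P1 P2 x ≤ 0 := fun x => by
    have := hTP1ub x; simp only [hub1def] at this; linarith
  have hiTP2 : ∀ x, v₀ x + T2 P1 P2 x ≤ 0 := fun x => by
    have := hTP2ub x; simp only [hub2def] at this; linarith
  -- T P ∈ S, hence T P ≤ P, hence P is a fixed point
  have hTPS : (T1 P1 P2, T2 P1 P2) ∈ S :=
    ⟨hTP1ub, hTP2ub,
      fun x => hmono1 P1 P2 (T1 P1 P2) (T2 P1 P2) hPT1 hPT2 hiTP1 hiTP2 x,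
      fun x => hmono2 P1 P2 (T1 P1 P2) (T2 P1 P2) hPT1 hPT2 hiTP1 hiTP2 x⟩
  have hfix1 : ∀ x, T1 P1 P2 x = P1 x := fun x =>
    le_antisymm (hle1 _ hTPS x) (hPT1 x)
  have hfix2 : ∀ x, T2 P1 P2 x = P2 x := fun x =>
    le_antisymm (hle2 _ hTPS x) (hPT2 x)
  -- P is a solution
  have hlapP1 : ∀ x, graphLap ω μ P1 x = F1 P1 P2 x := by
    intro x
    have h := hT1 P1 P2 x
    have hfe : T1 P1 P2 = P1 := funext hfix1
    rw [hfe] at h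
    linarith
  have hlapP2 : ∀ x, graphLap ω μ P2 x = F2 P1 P2 x := by
    intro x
    have h := hT2 P1 P2 x
    have hfe : T2 P1 P2 = P2 := funext hfix2
    rw [hfe] at h
    linarith
  have hPsol : isSolution ω μ G H N1 N2 u₀ v₀ lam P1 P2 := by
    intro x
    refine ⟨?_, ?_⟩
    · rw [hlapP1 x]
    · rw [hlapP2 x]
  have hAPB1 : ∀ u v : V → ℝ, isSolution ω μ G H N1 N2 u₀ v₀ lam u v →
      ∀ x, u₀ x + u x < 0 := fun u v hsol =>
    apb_strict ω μ hω_nonneg hμ hconn G H hGc hGpos hHpos hlam hN1 p1 u₀ v₀ u v hu₀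
      (fun x => (hsol x).1)
  have hAPB2 : ∀ u v : V → ℝ, isSolution ω μ G H N1 N2 u₀ v₀ lam u v →
      ∀ x, v₀ x + v x < 0 := fun u v hsol =>
    apb_strict ω μ hω_nonneg hμ hconn H G hHc hHpos hGpos hlam hN2 p2 v₀ u₀ v u hv₀
      (fun x => (hsol x).2)
  have hAPBP1 := hAPB1 P1 P2 hPsol
  have hAPBP2 := hAPB2 P1 P2 hPsol
  -- solutions are fixed points of T
  have hsolfix : ∀ u v : V → ℝ, isSolution ω μ G H N1 N2 u₀ v₀ lam u v →
      (∀ x, T1 u v x = u x) ∧ (∀ x, T2 u v x = v x) := by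
    intro u v hsol
    constructor
    · have h := huniq (fun y => T1 u v y - u y) ?_
      · intro x; linarith [h x]
      intro y
      rw [hLsub (T1 u v) u y, hT1]
      simp only [hF1def]
      rw [(hsol y).1]
      ring
    · have h := huniq (fun y => T2 u v y - v y) ?_
      · intro x; linarith [h x]
      intro y
      rw [hLsub (T2 u v) v y, hT2]
      simp only [hF2def]
      rw [(hsol y).2]
      ring
  -- any solution lies below P
  have hcomp : ∀ u' v' : V → ℝ, isSolution ω μ G H N1 N2 u₀ v₀ lam u' v' →
      (∀ x, u' x ≤ P1 x) ∧ (∀ x, v' x ≤ P2 x) := by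
    intro u' v' hsol
    have h1 := hAPB1 u' v' hsol
    have h2 := hAPB2 u' v' hsol
    obtain ⟨hfixu, hfixv⟩ := hsolfix u' v' hsol
    set m1 : V → ℝ := fun x => max (u' x) (P1 x) with hm1def
    set m2 : V → ℝ := fun x => max (v' x) (P2 x) with hm2def
    have hm1ub : ∀ x, m1 x ≤ ub1 x := by
      intro x
      simp only [hm1def, hub1def]
      apply max_le
      · linarith [h1 x]
      · have := hP1ub x; simp only [hub1def] at this; linarith
    have hm2ub : ∀ x, m2 x ≤ ub2 x := by
      intro x
      simp only [hm2def, hub2def]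
      apply max_le
      · linarith [h2 x]
      · have := hP2ub x; simp only [hub2def] at this; linarith
    have him1 : ∀ x, u₀ x + m1 x ≤ 0 := fun x => by
      have := hm1ub x; simp only [hub1def] at this; linarith
    have him2 : ∀ x, v₀ x + m2 x ≤ 0 := fun x => by
      have := hm2ub x; simp only [hub2def] at this; linarith
    have hmT1 : ∀ x, m1 x ≤ T1 m1 m2 x := by
      intro x
      have ha : u' x ≤ T1 m1 m2 x := by
        calc u' x = T1 u' v' x := (hfixu x).symm
          _ ≤ T1 m1 m2 x := hmono1 u' v' m1 m2 (fun y => le_max_left _ _)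
              (fun y => le_max_left _ _) him1 him2 x
      have hb : P1 x ≤ T1 m1 m2 x := by
        calc P1 x = T1 P1 P2 x := (hfix1 x).symm
          _ ≤ T1 m1 m2 x := hmono1 P1 P2 m1 m2 (fun y => le_max_right _ _)
              (fun y => le_max_right _ _) him1 him2 x
      exact max_le ha hb
    have hmT2 : ∀ x, m2 x ≤ T2 m1 m2 x := by
      intro x
      have ha : v' x ≤ T2 m1 m2 x := by
        calc v' x = T2 u' v' x := (hfixv x).symm
          _ ≤ T2 m1 m2 x := hmono2 u' v' m1 m2 (fun y => le_max_left _ _)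
              (fun y => le_max_left _ _) him1 him2 x
      have hb : P2 x ≤ T2 m1 m2 x := by
        calc P2 x = T2 P1 P2 x := (hfix2 x).symm
          _ ≤ T2 m1 m2 x := hmono2 P1 P2 m1 m2 (fun y => le_max_right _ _)
              (fun y => le_max_right _ _) him1 him2 x
      exact max_le ha hb
    have hmS : (m1, m2) ∈ S := ⟨hm1ub, hm2ub, hmT1, hmT2⟩
    exact ⟨fun x => le_trans (le_max_left _ _) (hle1 _ hmS x),
           fun x => le_trans (le_max_left _ _) (hle2 _ hmS x)⟩
  -- monotone factors
  have hmonoB : ∀ Φ : ℝ → ℝ, MonotoneOn Φ (Set.Ici 0) → (∀ s, 0 ≤ s → 0 < Φ s) →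
      ∀ t t' : ℝ, t ≤ t' →
        Real.exp t * Φ (Real.exp t) ≤ Real.exp t' * Φ (Real.exp t') := by
    intro Φ hm hp t t' h
    have he : Real.exp t ≤ Real.exp t' := Real.exp_le_exp.mpr h
    exact mul_le_mul he (hm (Set.mem_Ici.mpr (Real.exp_pos t).le)
      (Set.mem_Ici.mpr (Real.exp_pos t').le) he)
      (hp _ (Real.exp_pos t).le).le (Real.exp_pos t').le
  have hstrictB : ∀ Φ : ℝ → ℝ, StrictMonoOn Φ (Set.Ici 0) → (∀ s, 0 ≤ s → 0 < Φ s) →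
      ∀ t t' : ℝ, t < t' →
        Real.exp t * Φ (Real.exp t) < Real.exp t' * Φ (Real.exp t') := by
    intro Φ hm hp t t' h
    have he : Real.exp t < Real.exp t' := Real.exp_lt_exp.mpr h
    exact mul_lt_mul'' he (hm (Set.mem_Ici.mpr (Real.exp_pos t).le)
      (Set.mem_Ici.mpr (Real.exp_pos t').le) he)
      (Real.exp_pos t).le (hp _ (Real.exp_pos t).le).le
  -- strict maximality
  have hstrict : ∀ u' v' : V → ℝ, isSolution ω μ G H N1 N2 u₀ v₀ lam u' v' →
      (u', v') ≠ (P1, P2) → ∀ x, u' x < P1 x ∧ v' x < P2 x := by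
    intro u' v' hsol hne
    obtain ⟨hleu, hlev⟩ := hcomp u' v' hsol
    have hlapd1 : ∀ x, graphLap ω μ (fun y => u' y - P1 y) x =
        (-lam * Real.exp (v₀ x + v' x) * H (Real.exp (v₀ x + v' x)) *
          primFun G (Real.exp (u₀ x + u' x)))
        - (-lam * Real.exp (v₀ x + P2 x) * H (Real.exp (v₀ x + P2 x)) *
          primFun G (Real.exp (u₀ x + P1 x))) := by
      intro x
      rw [lap_sub, (hsol x).1, (hPsol x).1]
      ring
    have hlapd2 : ∀ x, graphLap ω μ (fun y => v' y - P2 y) x =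
        (-lam * Real.exp (u₀ x + u' x) * G (Real.exp (u₀ x + u' x)) *
          primFun H (Real.exp (v₀ x + v' x)))
        - (-lam * Real.exp (u₀ x + P1 x) * G (Real.exp (u₀ x + P1 x)) *
          primFun H (Real.exp (v₀ x + P2 x))) := by
      intro x
      rw [lap_sub, (hsol x).2, (hPsol x).2]
      ring
    have claim1 : ∀ z, u' z = P1 z → (v' z = P2 z ∧ ∀ y, 0 < ω z y → u' y = P1 y) := by
      intro z hz
      have hwmax : ∀ y, u' y - P1 y ≤ u' z - P1 z := by
        intro y
        rw [hz]
        linarith [hleu y]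
      have hlaple : graphLap ω μ (fun y => u' y - P1 y) z ≤ 0 :=
        lap_nonpos_at_max ω μ hω_nonneg hμ hwmax
      have hgpos : 0 < primFun G (Real.exp (u₀ z + P1 z)) :=
        primFun_pos hGc hGpos (Real.exp_pos _).le (Real.exp_lt_one_iff.mpr (hAPBP1 z))
      have hBle : Real.exp (v₀ z + v' z) * H (Real.exp (v₀ z + v' z)) ≤
          Real.exp (v₀ z + P2 z) * H (Real.exp (v₀ z + P2 z)) :=
        hmonoB H hHm hHpos _ _ (by linarith [hlev z])
      have hlz := hlapd1 z
      rw [hz] at hlz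
      have hge : 0 ≤ graphLap ω μ (fun y => u' y - P1 y) z := by
        rw [hlz]
        nlinarith [mul_nonneg (mul_nonneg hlam.le (sub_nonneg.mpr hBle)) hgpos.le]
      have heq0 : graphLap ω μ (fun y => u' y - P1 y) z = 0 := le_antisymm hlaple hge
      constructor
      · by_contra hvne
        have hvlt : v' z < P2 z := lt_of_le_of_ne (hlev z) hvne
        have hBlt : Real.exp (v₀ z + v' z) * H (Real.exp (v₀ z + v' z)) <
            Real.exp (v₀ z + P2 z) * H (Real.exp (v₀ z + P2 z)) :=
          hstrictB H hHmono hHpos _ _ (by linarith)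
        rw [heq0] at hlz
        nlinarith [mul_pos (mul_pos hlam (sub_pos.mpr hBlt)) hgpos]
      · intro y hy
        have h5 := neighbors_eq_at_max ω μ hω_nonneg hμ hwmax (le_of_eq heq0.symm) y hy
        have h6 : u' y - P1 y = u' z - P1 z := h5
        rw [hz] at h6
        linarith [h6]
    have claim2 : ∀ z, v' z = P2 z → (u' z = P1 z ∧ ∀ y, 0 < ω z y → v' y = P2 y) := by
      intro z hz
      have hwmax : ∀ y, v' y - P2 y ≤ v' z - P2 z := by
        intro y
        rw [hz]
        linarith [hlev y]
      have hlaple : graphLap ω μ (fun y => v' y - P2 y) z ≤ 0 :=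
        lap_nonpos_at_max ω μ hω_nonneg hμ hwmax
      have hgpos : 0 < primFun H (Real.exp (v₀ z + P2 z)) :=
        primFun_pos hHc hHpos (Real.exp_pos _).le (Real.exp_lt_one_iff.mpr (hAPBP2 z))
      have hBle : Real.exp (u₀ z + u' z) * G (Real.exp (u₀ z + u' z)) ≤
          Real.exp (u₀ z + P1 z) * G (Real.exp (u₀ z + P1 z)) :=
        hmonoB G hGm hGpos _ _ (by linarith [hleu z])
      have hlz := hlapd2 z
      rw [hz] at hlz
      have hge : 0 ≤ graphLap ω μ (fun y => v' y - P2 y) z := by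
        rw [hlz]
        nlinarith [mul_nonneg (mul_nonneg hlam.le (sub_nonneg.mpr hBle)) hgpos.le]
      have heq0 : graphLap ω μ (fun y => v' y - P2 y) z = 0 := le_antisymm hlaple hge
      constructor
      · by_contra hune
        have hult : u' z < P1 z := lt_of_le_of_ne (hleu z) hune
        have hBlt : Real.exp (u₀ z + u' z) * G (Real.exp (u₀ z + u' z)) <
            Real.exp (u₀ z + P1 z) * G (Real.exp (u₀ z + P1 z)) :=
          hstrictB G hGmono hGpos _ _ (by linarith)
        rw [heq0] at hlz
        nlinarith [mul_pos (mul_pos hlam (sub_pos.mpr hBlt)) hgpos]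
      · intro y hy
        have h5 := neighbors_eq_at_max ω μ hω_nonneg hμ hwmax (le_of_eq heq0.symm) y hy
        have h6 : v' y - P2 y = v' z - P2 z := h5
        rw [hz] at h6
        linarith [h6]
    by_contra hcon
    rw [not_forall] at hcon
    obtain ⟨x1, hx1⟩ := hcon
    have hx1' : u' x1 = P1 x1 ∨ v' x1 = P2 x1 := by
      rcases not_and_or.mp hx1 with h | h
      · exact Or.inl (le_antisymm (hleu x1) (not_lt.mp h))
      · exact Or.inr (le_antisymm (hlev x1) (not_lt.mp h))
    have hall : ∀ z, z ∈ {z : V | u' z = P1 z ∨ v' z = P2 z} := by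
      apply graph_propagate ω hconn _ ⟨x1, hx1'⟩
      intro z hz y hy
      simp only [Set.mem_setOf_eq] at hz ⊢
      rcases hz with h | h
      · exact Or.inl ((claim1 z h).2 y hy)
      · exact Or.inr ((claim2 z h).2 y hy)
    have hallb : ∀ z, u' z = P1 z ∧ v' z = P2 z := by
      intro z
      have hm := hall z
      simp only [Set.mem_setOf_eq] at hm
      rcases hm with h | h
      · exact ⟨h, (claim1 z h).1⟩
      · exact ⟨(claim2 z h).1, h⟩
    apply hne
    have e1 : u' = P1 := funext fun z => (hallb z).1
    have e2 : v' = P2 := funext fun z => (hallb z).2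
    rw [e1, e2]
  exact ⟨P1, P2, ⟨hPsol, fun u' v' hs hnep x => hstrict u' v' hs hnep x⟩,
    fun x => ⟨hAPBP1 x, hAPBP2 x⟩⟩
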